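/- Let (M²,g) be a Riemannian surface and T a symmetric (1,1)-tensor field. Any two of the following conditions imply the remaining ones: (i) div T = 0; (ii) trace T is constant; (iii) grad(trace T) = 2 div T; (iv) T is a Codazzi tensor field. -/

import Mathlib

/-- Abstract model of the `C^∞(M)`-module of (local) vector fields on an
`m`-dimensional Riemannian manifold, equipped with an orthonormal frame `E`,
the Levi-Civita connection `D`, and the derivation action `act` of vector
fields on smooth functions `F`. -/
structure RiemannianFrame (m : ℕ) where
  F : Type
  V : Type
  [instCommRing : CommRing F]
  [instAlgebra : Algebra ℝ F]
  [instAddCommGroup : AddCommGroup V]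
  [instModule : Module F V]
  g : V → V → F
  D : V → V → V
  act : V → F → F
  bracket : V → V → V
  E : Fin m → V
  g_symm : ∀ X Y, g X Y = g Y X
  g_addl : ∀ X Y Z, g (X + Y) Z = g X Z + g Y Z
  g_smull : ∀ (f : F) (X Y : V), g (f • X) Y = f * g X Y
  act_addf : ∀ (X : V) (f h : F), act X (f + h) = act X f + act X h
  act_mulf : ∀ (X : V) (f h : F), act X (f * h) = act X f * h + f * act X h
  act_addX : ∀ (X Y : V) (f : F), act (X + Y) f = act X f + act Y f
  act_smulX : ∀ (f : F) (X : V) (h : F), act (f • X) h = f * act X h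
  act_const : ∀ (X : V) (r : ℝ), act X (algebraMap ℝ F r) = 0
  D_addX : ∀ X Y Z, D (X + Y) Z = D X Z + D Y Z
  D_smulX : ∀ (f : F) (X Y : V), D (f • X) Y = f • D X Y
  D_addY : ∀ X Y Z, D X (Y + Z) = D X Y + D X Z
  D_leibniz : ∀ (X : V) (f : F) (Y : V), D X (f • Y) = act X f • Y + f • D X Y
  metric_compat : ∀ X Y Z, act X (g Y Z) = g (D X Y) Z + g Y (D X Z)
  torsion_free : ∀ X Y, D X Y - D Y X = bracket X Y
  bracket_act : ∀ (X Y : V) (f : F),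
    act (bracket X Y) f = act X (act Y f) - act Y (act X f)
  frame_orthonormal : ∀ i j, g (E i) (E j) = if i = j then 1 else 0
  frame_span : ∀ X, X = ∑ i, g X (E i) • E i

attribute [instance] RiemannianFrame.instCommRing RiemannianFrame.instAlgebra
  RiemannianFrame.instAddCommGroup RiemannianFrame.instModule

namespace RiemannianFrame

variable {m : ℕ} (R : RiemannianFrame m)

/-- The covariant derivative `(∇_X T)(Y)` of a `(1,1)`-tensor field `T`. -/
def covT (T : R.V → R.V) (X Y : R.V) : R.V := R.D X (T Y) - T (R.D X Y)

/-- `T` is a `(1,1)`-tensor field: it is `C^∞(M)`-linear. -/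
def IsTensor (T : R.V → R.V) : Prop :=
  (∀ X Y, T (X + Y) = T X + T Y) ∧ ∀ (f : R.F) (X : R.V), T (f • X) = f • T X

/-- `T` is symmetric with respect to the metric. -/
def IsSymmT (T : R.V → R.V) : Prop := ∀ X Y, R.g (T X) Y = R.g X (T Y)

/-- `T` is a Codazzi tensor field: `(∇_X T)(Y) = (∇_Y T)(X)`. -/
def IsCodazzi (T : R.V → R.V) : Prop := ∀ X Y, R.covT T X Y = R.covT T Y X

/-- The trace of a `(1,1)`-tensor field. -/
def traceT (T : R.V → R.V) : R.F := ∑ i, R.g (T (R.E i)) (R.E i)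

/-- The divergence of a `(1,1)`-tensor field, `div T = Σᵢ (∇_{Eᵢ}T)(Eᵢ)`. -/
def divT (T : R.V → R.V) : R.V := ∑ i, R.covT T (R.E i) (R.E i)

/-- The gradient of a function. -/
def gradF (f : R.F) : R.V := ∑ i, R.act (R.E i) f • R.E i

/-- The divergence of a vector field. -/
def divV (Z : R.V) : R.F := ∑ i, R.g (R.D (R.E i) Z) (R.E i)

/-- The geometric Laplacian `Δ f = -div(grad f)`
(sign convention matching `Δ^R T = -trace ∇²T`). -/
def lapF (f : R.F) : R.F := - R.divV (R.gradF f)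

/-- The pointwise inner product `⟨T,S⟩` of two `(1,1)`-tensor fields. -/
def innerTT (T S : R.V → R.V) : R.F :=
  ∑ i, ∑ j, R.g (T (R.E i)) (R.E j) * R.g (S (R.E i)) (R.E j)

/-- The pointwise squared norm `|T|²`. -/
def normT2 (T : R.V → R.V) : R.F := R.innerTT T T

/-- The pointwise inner product `⟨∇T, ∇S⟩` of the `(0,3)`-tensors `∇T`, `∇S`. -/
def innerNabla (T S : R.V → R.V) : R.F :=
  ∑ i, R.innerTT (fun Y => R.covT T (R.E i) Y) (fun Y => R.covT S (R.E i) Y)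

/-- The pointwise squared norm `|∇T|²`. -/
def normNabla2 (T : R.V → R.V) : R.F := R.innerNabla T T

/-- The second covariant derivative `(∇²T)(X,Y,Z) = (∇_X (∇T))(Y,Z)`. -/
def nabla2 (T : R.V → R.V) (X Y Z : R.V) : R.V :=
  R.D X (R.covT T Y Z) - R.covT T (R.D X Y) Z - R.covT T Y (R.D X Z)

/-- `trace(∇²T)`, as a `(1,1)`-tensor field. -/
def traceNabla2 (T : R.V → R.V) (X : R.V) : R.V := ∑ i, R.nabla2 T (R.E i) (R.E i) X

/-- The rough Laplacian `Δ^R T = -trace ∇²T`. -/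
def roughLap (T : R.V → R.V) (X : R.V) : R.V := - R.traceNabla2 T X

/-- The curvature tensor `R(X,Y)Z = ∇_X∇_Y Z - ∇_Y∇_X Z - ∇_{[X,Y]}Z`. -/
def curv (X Y Z : R.V) : R.V :=
  R.D X (R.D Y Z) - R.D Y (R.D X Z) - R.D (R.bracket X Y) Z

/-- A function is constant iff all its directional derivatives vanish
(`M` is assumed connected). -/
def IsConst (f : R.F) : Prop := ∀ X, R.act X f = 0

end RiemannianFrame

/-- The Gaussian curvature of a surface, `K = ⟨R(E₁,E₂)E₁, E₂⟩`. -/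
def RiemannianFrame.K (R : RiemannianFrame 2) : R.F :=
  R.g (R.curv (R.E 0) (R.E 1) (R.E 0)) (R.E 1)


/-!
For symmetric `T`, differentiating `trace T = Σᵢ ⟨T Eᵢ, Eᵢ⟩` along an orthonormal frame, the
terms involving `∇Eᵢ` cancel because the connection forms are skew while `T` is symmetric.
Together with the symmetry of `∇_X T` this gives
`⟨grad (trace T) - div T, X⟩ = Σᵢ ⟨(∇_X T)Eᵢ - (∇_{Eᵢ}T)X, Eᵢ⟩`.
On a surface the Codazzi defect has the single component `(∇_{E₁}T)E₂ - (∇_{E₂}T)E₁`, and the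
identity for `X = E₁, E₂` recovers both of its coordinates, so `T` is Codazzi iff
`div T = grad (trace T)`. Since (ii) says `grad (trace T) = 0`, all four conditions are linear
relations between `div T` and `grad (trace T)`, and any two of them force both to vanish.
-/

namespace RiemannianFrame

section

variable {m : ℕ} (R : RiemannianFrame m)

lemma g_add_right (X Y Z : R.V) : R.g X (Y + Z) = R.g X Y + R.g X Z := by
  rw [R.g_symm, R.g_addl, R.g_symm Y, R.g_symm Z]

lemma g_smul_right (f : R.F) (X Y : R.V) : R.g X (f • Y) = f * R.g X Y := by
  rw [R.g_symm, R.g_smull, R.g_symm]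

def metric : R.V →ₗ[R.F] R.V →ₗ[R.F] R.F :=
  LinearMap.mk₂ R.F R.g R.g_addl R.g_smull R.g_add_right R.g_smul_right

lemma g_zero_left (X : R.V) : R.g 0 X = 0 := map_zero (R.metric.flip X)

lemma g_sub_left (X Y Z : R.V) : R.g (X - Y) Z = R.g X Z - R.g Y Z :=
  map_sub (R.metric.flip Z) X Y

lemma g_sum_left {ι : Type*} (s : Finset ι) (f : ι → R.V) (X : R.V) :
    R.g (∑ i ∈ s, f i) X = ∑ i ∈ s, R.g (f i) X :=
  map_sum (R.metric.flip X) f s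

lemma g_sum_right {ι : Type*} (s : Finset ι) (f : ι → R.V) (X : R.V) :
    R.g X (∑ i ∈ s, f i) = ∑ i ∈ s, R.g X (f i) :=
  map_sum (R.metric X) f s

lemma eq_zero_of_forall_g_frame {v : R.V} (h : ∀ j, R.g v (R.E j) = 0) : v = 0 := by
  rw [R.frame_span v]
  simp only [h, zero_smul, Finset.sum_const_zero]

lemma g_eq_sum_frame (X Y : R.V) : R.g X Y = ∑ j, R.g X (R.E j) * R.g Y (R.E j) := by
  conv_lhs => rw [R.frame_span Y]
  simp only [R.g_sum_right, R.g_smul_right, mul_comm]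

lemma act_sum {ι : Type*} (s : Finset ι) (f : ι → R.F) (X : R.V) :
    R.act X (∑ i ∈ s, f i) = ∑ i ∈ s, R.act X (f i) :=
  map_sum (AddMonoidHom.mk' (R.act X) (R.act_addf X)) f s

def derivL (f : R.F) : R.V →ₗ[R.F] R.F where
  toFun X := R.act X f
  map_add' X Y := R.act_addX X Y f
  map_smul' g X := R.act_smulX g X f

lemma g_gradF (f : R.F) (X : R.V) : R.g (R.gradF f) X = R.act X f := by
  change _ = R.derivL f X
  conv_rhs => rw [R.frame_span X]
  simp only [gradF, R.g_sum_left, R.g_smull, map_sum, map_smul, smul_eq_mul,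
    R.g_symm (R.E _) X, mul_comm]
  rfl

lemma isConst_iff_gradF_eq_zero (f : R.F) : R.IsConst f ↔ R.gradF f = 0 := by
  refine ⟨fun h => ?_, fun h X => ?_⟩
  · exact Finset.sum_eq_zero fun i _ => by rw [h, zero_smul]
  · rw [← R.g_gradF, h, R.g_zero_left]

lemma g_D_frame_add_g_D_frame (X : R.V) (i j : Fin m) :
    R.g (R.D X (R.E i)) (R.E j) + R.g (R.D X (R.E j)) (R.E i) = 0 := by
  have hconst : R.g (R.E i) (R.E j) = algebraMap ℝ R.F (if i = j then 1 else 0) := by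
    rw [R.frame_orthonormal]; split_ifs <;> simp
  have h := R.metric_compat X (R.E i) (R.E j)
  rw [hconst, R.act_const, R.g_symm (R.E i)] at h
  exact h.symm

variable {T : R.V → R.V}

lemma g_apply_comm (hTsymm : R.IsSymmT T) (X Y : R.V) : R.g (T X) Y = R.g (T Y) X := by
  rw [hTsymm, R.g_symm]

lemma sum_g_T_frame_D_frame_add_self (hTsymm : R.IsSymmT T) (X : R.V) :
    ∑ i, R.g (T (R.E i)) (R.D X (R.E i)) + ∑ i, R.g (T (R.E i)) (R.D X (R.E i)) = 0 := by
  have hsum : ∑ i, R.g (T (R.E i)) (R.D X (R.E i))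
      = ∑ i, ∑ j, R.g (T (R.E i)) (R.E j) * R.g (R.D X (R.E i)) (R.E j) :=
    Finset.sum_congr rfl fun i _ => R.g_eq_sum_frame _ _
  have hswap : ∑ i, R.g (T (R.E i)) (R.D X (R.E i))
      = ∑ i, ∑ j, R.g (T (R.E i)) (R.E j) * R.g (R.D X (R.E j)) (R.E i) := by
    rw [hsum, Finset.sum_comm]
    exact Finset.sum_congr rfl fun i _ => Finset.sum_congr rfl fun j _ => by
      rw [R.g_apply_comm hTsymm]
  nth_rewrite 1 [hsum]
  rw [hswap, ← Finset.sum_add_distrib]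
  refine Finset.sum_eq_zero fun i _ => ?_
  simp only [← Finset.sum_add_distrib, ← mul_add, R.g_D_frame_add_g_D_frame,
    mul_zero, Finset.sum_const_zero]

lemma act_traceT (hTsymm : R.IsSymmT T) (X : R.V) :
    R.act X (R.traceT T) = ∑ i, R.g (R.covT T X (R.E i)) (R.E i) := by
  have term : ∀ i, R.act X (R.g (T (R.E i)) (R.E i)) = R.g (R.covT T X (R.E i)) (R.E i)
      + (R.g (T (R.E i)) (R.D X (R.E i)) + R.g (T (R.E i)) (R.D X (R.E i))) := by
    intro i
    rw [R.metric_compat, covT, R.g_sub_left, R.g_apply_comm hTsymm (R.D X _)]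
    ring
  rw [traceT, R.act_sum, Finset.sum_congr rfl fun i _ => term i, Finset.sum_add_distrib,
    Finset.sum_add_distrib, R.sum_g_T_frame_D_frame_add_self hTsymm, add_zero]

lemma g_covT_comm (hTsymm : R.IsSymmT T) (X Y Z : R.V) :
    R.g (R.covT T X Y) Z = R.g (R.covT T X Z) Y := by
  have h := R.metric_compat X (T Y) Z
  have h' := R.metric_compat X (T Z) Y
  rw [covT, covT, R.g_sub_left, R.g_sub_left, R.g_apply_comm hTsymm (R.D X Y),
    R.g_apply_comm hTsymm (R.D X Z)]
  rw [R.g_apply_comm hTsymm Z] at h'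
  linear_combination h' - h

/-- The decomposition `div T = grad (trace T) - Z`, where `Z` is the trace of the Codazzi
defect `(X, Y) ↦ (∇_X T)Y - (∇_Y T)X`. -/
lemma g_gradF_traceT_sub_divT (hTsymm : R.IsSymmT T) (X : R.V) :
    R.g (R.gradF (R.traceT T) - R.divT T) X
      = ∑ i, R.g (R.covT T X (R.E i) - R.covT T (R.E i) X) (R.E i) := by
  simp only [R.g_sub_left, R.g_gradF, R.act_traceT hTsymm, divT, R.g_sum_left,
    R.g_covT_comm hTsymm (R.E _) (R.E _) X, Finset.sum_sub_distrib]

lemma divT_eq_gradF_traceT_of_isCodazzi (hTsymm : R.IsSymmT T) (hcod : R.IsCodazzi T) :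
    R.divT T = R.gradF (R.traceT T) := by
  refine (sub_eq_zero.mp (R.eq_zero_of_forall_g_frame fun j => ?_)).symm
  simp only [R.g_gradF_traceT_sub_divT hTsymm, hcod (R.E j), sub_self, R.g_zero_left,
    Finset.sum_const_zero]

lemma covT_add_left (hT : R.IsTensor T) (X Y Z : R.V) :
    R.covT T (X + Y) Z = R.covT T X Z + R.covT T Y Z := by
  simp only [covT, R.D_addX, hT.1]
  abel

lemma covT_smul_left (hT : R.IsTensor T) (f : R.F) (X Y : R.V) :
    R.covT T (f • X) Y = f • R.covT T X Y := by
  rw [covT, covT, R.D_smulX, R.D_smulX, hT.2, smul_sub]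

lemma covT_add_right (hT : R.IsTensor T) (X Y Z : R.V) :
    R.covT T X (Y + Z) = R.covT T X Y + R.covT T X Z := by
  simp only [covT, hT.1, R.D_addY]
  abel

lemma covT_smul_right (hT : R.IsTensor T) (f : R.F) (X Y : R.V) :
    R.covT T X (f • Y) = f • R.covT T X Y := by
  rw [covT, covT, hT.2, R.D_leibniz, R.D_leibniz, hT.1, hT.2, hT.2, smul_sub]
  abel

def covTBilin (hT : R.IsTensor T) : R.V →ₗ[R.F] R.V →ₗ[R.F] R.V :=
  LinearMap.mk₂ R.F (R.covT T) (R.covT_add_left hT) (R.covT_smul_left hT)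
    (R.covT_add_right hT) (R.covT_smul_right hT)

lemma bilin_comm_of_frame {W : Type*} [AddCommGroup W] [Module R.F W]
    (B : R.V →ₗ[R.F] R.V →ₗ[R.F] W) (h : ∀ k l, B (R.E k) (R.E l) = B (R.E l) (R.E k))
    (X Y : R.V) : B X Y = B Y X := by
  rw [R.frame_span X, R.frame_span Y]
  simp only [map_sum, map_smul, LinearMap.sum_apply, LinearMap.smul_apply, Finset.smul_sum,
    smul_smul]
  rw [Finset.sum_comm]
  simp only [h, mul_comm]

end

lemma isCodazzi_of_divT_eq_gradF_traceT (R : RiemannianFrame 2) {T : R.V → R.V}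
    (hT : R.IsTensor T) (hTsymm : R.IsSymmT T) (h : R.divT T = R.gradF (R.traceT T)) :
    R.IsCodazzi T := by
  have trace_defect : ∀ X, ∑ i, R.g (R.covT T X (R.E i) - R.covT T (R.E i) X) (R.E i) = 0 :=
    fun X => by rw [← R.g_gradF_traceT_sub_divT hTsymm, h, sub_self, R.g_zero_left]
  have h0 := trace_defect (R.E 0)
  have h1 := trace_defect (R.E 1)
  simp only [Fin.sum_univ_two, sub_self, zero_add, add_zero, R.g_sub_left] at h0 h1
  have h01 : R.covT T (R.E 0) (R.E 1) = R.covT T (R.E 1) (R.E 0) := by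
    refine sub_eq_zero.mp (R.eq_zero_of_forall_g_frame (Fin.forall_fin_two.mpr ⟨?_, ?_⟩))
    · rw [R.g_sub_left]; linear_combination -h1
    · rw [R.g_sub_left]; linear_combination h0
  have hframe : ∀ k l : Fin 2, R.covT T (R.E k) (R.E l) = R.covT T (R.E l) (R.E k) := by
    intro k l
    fin_cases k <;> fin_cases l
    exacts [rfl, h01, h01.symm, rfl]
  exact R.bilin_comm_of_frame (R.covTBilin hT) hframe

end RiemannianFrame

/-- On a surface, for a symmetric `(1,1)`-tensor field `T`, any
two of the following imply the remaining ones: (i) `div T = 0`;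
(ii) `trace T` constant; (iii) `grad(trace T) = 2 div T` (holomorphicity of
`⟨T(∂_z),∂_z⟩`); (iv) `T` is Codazzi. -/
theorem stmt16 (R : RiemannianFrame 2) (T : R.V → R.V)
    (hT : R.IsTensor T) (hTsymm : R.IsSymmT T) :
    (R.divT T = 0 ∧ R.IsConst (R.traceT T) →
      R.gradF (R.traceT T) = (2 : R.F) • R.divT T ∧ R.IsCodazzi T) ∧
    (R.divT T = 0 ∧ R.gradF (R.traceT T) = (2 : R.F) • R.divT T →
      R.IsConst (R.traceT T) ∧ R.IsCodazzi T) ∧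
    (R.divT T = 0 ∧ R.IsCodazzi T →
      R.IsConst (R.traceT T) ∧ R.gradF (R.traceT T) = (2 : R.F) • R.divT T) ∧
    (R.IsConst (R.traceT T) ∧ R.gradF (R.traceT T) = (2 : R.F) • R.divT T →
      R.divT T = 0 ∧ R.IsCodazzi T) ∧
    (R.IsConst (R.traceT T) ∧ R.IsCodazzi T →
      R.divT T = 0 ∧ R.gradF (R.traceT T) = (2 : R.F) • R.divT T) ∧
    (R.gradF (R.traceT T) = (2 : R.F) • R.divT T ∧ R.IsCodazzi T →
      R.divT T = 0 ∧ R.IsConst (R.traceT T)) := by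
  have hcod : R.IsCodazzi T ↔ R.divT T = R.gradF (R.traceT T) :=
    ⟨R.divT_eq_gradF_traceT_of_isCodazzi hTsymm, R.isCodazzi_of_divT_eq_gradF_traceT hT hTsymm⟩
  have two_unit : IsUnit (2 : R.F) := by
    have := (IsUnit.mk0 (2 : ℝ) two_ne_zero).map (algebraMap ℝ R.F)
    rwa [map_ofNat] at this
  rw [hcod, R.isConst_iff_gradF_eq_zero]
  generalize R.divT T = d, R.gradF (R.traceT T) = γ
  refine ⟨?_, ?_, ?_, ?_, ?_, ?_⟩
  · rintro ⟨rfl, rfl⟩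
    simp
  · rintro ⟨rfl, h⟩
    simp_all
  · rintro ⟨rfl, rfl⟩
    simp
  · rintro ⟨rfl, h⟩
    have hd : d = 0 := two_unit.smul_eq_zero.mp h.symm
    exact ⟨hd, hd⟩
  · rintro ⟨rfl, rfl⟩
    simp
  · rintro ⟨h, rfl⟩
    have hd : d = 0 := left_eq_add.mp (h.trans (two_smul R.F d))
    exact ⟨hd, hd⟩
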